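/- arXiv:2303.06392 — 2 statements merged into one kernel-verified Lean document; each statement's English description precedes it below -/
import Mathlib

section
/- Let E be a real normed space and let K, A ⊆ E be closed convex cones such that cl S_K (the norm closure of the convex hull of the norm-base of K) is weakly compact and 0 ∉ cl S_K. If A ∩ (−K) = {0}, then there exists a nonzero continuous linear functional x* ∈ E* such that x*(a) ≥ 0 for all a ∈ A and x*(k) < 0 for all k ∈ (−K) \ {0}. -/
open Set

variable {E : Type*} [NormedAddCommGroup E] [NormedSpace ℝ E]

/-- `K` is a cone: contains `0` and is closed under nonnegative scalar multiplication. -/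
def IsCone (K : Set E) : Prop :=
  (0 : E) ∈ K ∧ ∀ t : ℝ, 0 ≤ t → ∀ x ∈ K, t • x ∈ K

/-- A cone is nontrivial if it is neither `{0}` nor the whole space. -/
def IsNontrivialCone (K : Set E) : Prop :=
  IsCone K ∧ K ≠ {0} ∧ K ≠ Set.univ

/-- The norm-base of a cone: its intersection with the unit sphere. -/
def normBase (K : Set E) : Set E := {x ∈ K | ‖x‖ = 1}

/-- Closure of a set with respect to the weak topology `σ(E, E*)`. -/
noncomputable def wClosure (S : Set E) : Set E :=
  (toWeakSpace ℝ E).symm '' closure ((toWeakSpace ℝ E) '' S)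

/-- A set is weakly compact if it is compact in the weak topology `σ(E, E*)`. -/
def WeaklyCompact (S : Set E) : Prop :=
  IsCompact ((toWeakSpace ℝ E) '' S)

/-- A set is weakly closed if it equals its weak closure. -/
noncomputable def WeaklyClosed (S : Set E) : Prop :=
  wClosure S = S

/-- The (topological) dual cone `K⁺`. -/
def dualCone (K : Set E) : Set (E →L[ℝ] ℝ) :=
  {f | ∀ k ∈ K, 0 ≤ f k}

/-- The set `K^#` of functionals strictly positive on `K \ {0}`. -/
def sharpCone (K : Set E) : Set (E →L[ℝ] ℝ) :=
  {f | ∀ k ∈ K, k ≠ 0 → 0 < f k}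

/-- The set `K^{w#}` of functionals strictly positive on the weak closure of the norm-base. -/
noncomputable def wSharpCone (K : Set E) : Set (E →L[ℝ] ℝ) :=
  {f | ∀ x ∈ wClosure (normBase K), 0 < f x}

/-- The algebraic interior (core) of a set in a real vector space. -/
def core {X : Type*} [AddCommGroup X] [Module ℝ X] (Ω : Set X) : Set X :=
  {x ∈ Ω | ∀ v : X, ∃ ε > 0, ∀ t ∈ Set.Icc (0 : ℝ) ε, x + t • v ∈ Ω}

/-- The augmented dual cone `K^{a+}`. -/
def augDualCone (K : Set E) : Set ((E →L[ℝ] ℝ) × ℝ) :=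
  {p | 0 ≤ p.2 ∧ ∀ y ∈ K, 0 ≤ p.1 y - p.2 * ‖y‖}

/-- The set `K^{a#}`. -/
def augSharpCone (K : Set E) : Set ((E →L[ℝ] ℝ) × ℝ) :=
  {p | 0 ≤ p.2 ∧ p.1 ∈ sharpCone K ∧ ∀ y ∈ K, y ≠ 0 → 0 < p.1 y - p.2 * ‖y‖}

/-- The set `K^{aw#}`. -/
noncomputable def augWSharpCone (K : Set E) : Set ((E →L[ℝ] ℝ) × ℝ) :=
  {p | 0 ≤ p.2 ∧ p.1 ∈ sharpCone K ∧ ∀ y ∈ wClosure (normBase K), p.2 < p.1 y}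

/-- `S_C = conv(B_C)`. -/
noncomputable def convBase (C : Set E) : Set E := convexHull ℝ (normBase C)

/-- `S_C^0 = conv({0} ∪ B_C)`. -/
noncomputable def convBase0 (C : Set E) : Set E := convexHull ℝ ({0} ∪ normBase C)

/-! The functional is obtained by separating the weakly compact convex set `cl S_K` from the
closed convex set `-A` (weakly closed by Mazur). Since `0 ∈ -A`, the separating level is
positive, so `x*` is positive on `B_K ⊆ cl S_K` and hence, by scaling, on `K \ {0}`; since `A`
is a cone, boundedness of `x*` from below on `A` forces `x*` to be nonnegative there. -/

theorem exists_clm_separation_of_weaklyCompact {C S : Set E} (hCcv : Convex ℝ C)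
    (hCcl : IsClosed C) (hScv : Convex ℝ S) (hS : WeaklyCompact S) (hCS : Disjoint C S) :
    ∃ (f : E →L[ℝ] ℝ) (u : ℝ), (∀ c ∈ C, f c < u) ∧ ∀ s ∈ S, u < f s := by
  have : LocallyConvexSpace ℝ (WeakSpace ℝ E) := WeakBilin.locallyConvexSpace
  have hC'cl : IsClosed (toWeakSpace ℝ E '' C) := by
    have hMazur := hCcv.toWeakSpace_closure ℝ
    rw [hCcl.closure_eq] at hMazur
    exact hMazur ▸ isClosed_closure
  obtain ⟨g, u, v, hgC, huv, hgS⟩ := geometric_hahn_banach_closed_compact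
    (hCcv.linear_image (toWeakSpace ℝ E).toLinearMap) hC'cl
    (hScv.linear_image (toWeakSpace ℝ E).toLinearMap) hS
    ((disjoint_image_iff (toWeakSpace ℝ E).injective).2 hCS)
  exact ⟨g.comp (toWeakSpaceCLM ℝ E), u, fun c hc => hgC _ (mem_image_of_mem _ hc),
    fun s hs => huv.trans (hgS _ (mem_image_of_mem _ hs))⟩

theorem IsCone.inv_norm_smul_mem_normBase {K : Set E} (hK : IsCone K) {x : E} (hxK : x ∈ K)
    (hx : x ≠ 0) : ‖x‖⁻¹ • x ∈ normBase K :=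
  ⟨hK.2 _ (by positivity) x hxK, norm_smul_inv_norm hx⟩

theorem IsCone.pos_of_pos_on_normBase {K : Set E} (hK : IsCone K) {f : E →L[ℝ] ℝ}
    (hf : ∀ x ∈ normBase K, 0 < f x) {x : E} (hxK : x ∈ K) (hx : x ≠ 0) : 0 < f x := by
  have h := hf _ (hK.inv_norm_smul_mem_normBase hxK hx)
  rw [map_smul, smul_eq_mul] at h
  exact pos_of_mul_pos_right h (inv_nonneg.2 (norm_nonneg x))

theorem IsCone.nonneg_of_forall_lt {A : Set E} (hA : IsCone A) {f : E →L[ℝ] ℝ} {c : ℝ}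
    (hf : ∀ a ∈ A, c < f a) {a : E} (ha : a ∈ A) : 0 ≤ f a := by
  have hc : c < 0 := by simpa using hf 0 hA.1
  by_contra! hfa
  have h := hf _ (hA.2 (c / f a) (div_nonneg_of_nonpos hc.le hfa.le) a ha)
  rw [map_smul, smul_eq_mul, div_mul_cancel₀ c hfa.ne] at h
  exact h.false

theorem closure_convBase_subset {K : Set E} (hKcl : IsClosed K) (hKcv : Convex ℝ K) :
    closure (convBase K) ⊆ K :=
  closure_minimal (convexHull_min (fun _ hx => hx.1) hKcv) hKcl

theorem disjoint_neg_of_inter_neg_eq_zero {G : Type*} [AddGroup G] {A K S : Set G}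
    (hSK : S ⊆ K) (h0 : (0 : G) ∉ S) (hsep : A ∩ (-K) = {0}) : Disjoint (-A) S := by
  refine disjoint_left.2 fun x hxA hxS => h0 ?_
  have hx : -x ∈ A ∩ (-K) := ⟨hxA, by simpa using hSK hxS⟩
  rw [hsep, mem_singleton_iff, neg_eq_zero] at hx
  exact hx ▸ hxS

theorem stmt4 (K A : Set E) (hK : IsNontrivialCone K) (hA : IsCone A)
    (hKcl : IsClosed K) (hKcv : Convex ℝ K) (hAcl : IsClosed A) (hAcv : Convex ℝ A)
    (hcomp : WeaklyCompact (closure (convBase K)))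
    (h0 : (0 : E) ∉ closure (convBase K))
    (hsep : A ∩ (-K) = {0}) :
    ∃ f : E →L[ℝ] ℝ, f ≠ 0 ∧ (∀ a ∈ A, 0 ≤ f a) ∧
      ∀ k ∈ (-K : Set E), k ≠ 0 → f k < 0 := by
  obtain ⟨hKcone, hKne, -⟩ := hK
  obtain ⟨f, u, hfA, hfS⟩ := exists_clm_separation_of_weaklyCompact hAcv.neg hAcl.neg
    (convex_convexHull ℝ _).closure hcomp
    (disjoint_neg_of_inter_neg_eq_zero (closure_convBase_subset hKcl hKcv) h0 hsep)
  have hu : 0 < u := by simpa using hfA 0 (by simpa using hA.1)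
  have hfK : ∀ x ∈ K, x ≠ 0 → 0 < f x := fun x hxK hx =>
    hKcone.pos_of_pos_on_normBase
      (fun y hy => hu.trans (hfS y (subset_closure (subset_convexHull ℝ _ hy)))) hxK hx
  obtain ⟨x₀, hx₀K, hx₀⟩ : ∃ x ∈ K, x ≠ 0 := by
    by_contra! hK0
    exact hKne (eq_singleton_iff_unique_mem.2 ⟨hKcone.1, hK0⟩)
  have hfA' : ∀ a ∈ A, 0 ≤ f a := fun _ =>
    hA.nonneg_of_forall_lt fun b hb => by simpa [neg_lt] using hfA (-b) (by simpa using hb)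
  refine ⟨f, fun hf => by simpa [hf] using hfK x₀ hx₀K hx₀, hfA', fun k hk hk0 => ?_⟩
  simpa using hfK (-k) hk (neg_ne_zero.2 hk0)
end

section
/- Let E be a real normed space and K ⊆ E a nontrivial cone with norm-base B_K such that the weak closure cl_w B_K is weakly compact. Then: (a) cor K^{a+} = {(x*, α) ∈ K^{aw#} | α > 0}; and (b) cor K^{a+} ≠ ∅ if and only if 0 ∉ cl S_K, where S_K = conv(B_K) and cl denotes norm closure. -/
open Set

variable {E : Type*} [NormedAddCommGroup E] [NormedSpace ℝ E]

/-!
A point `(f, α)` lies in the core of `K^{a+}` exactly when `α > 0` and `f` exceeds `α` by a uniform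
margin on the norm-base: moving in the directions `(0, -1)` and `(0, 1)` forces `α > 0` and
`f ≥ α + ε` on `B_K`, hence on its weak closure; conversely a uniform margin absorbs every small
perturbation, since `|g y| ≤ ‖g‖` on the unit sphere. Weak compactness of `cl_w B_K` turns the
strict inequality `f > α` on it into such a margin. Part (b) is the separation of `0` from
`cl S_K` by a continuous functional bounded below by a positive constant on `B_K`.
-/

open Set

section WeakClosure

lemma subset_wClosure (S : Set E) : S ⊆ wClosure S := fun x hx =>
  ⟨toWeakSpace ℝ E x, subset_closure (mem_image_of_mem _ hx), (toWeakSpace ℝ E).symm_apply_apply x⟩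

lemma continuous_apply_toWeakSpace_symm (f : E →L[ℝ] ℝ) :
    Continuous fun z : WeakSpace ℝ E => f ((toWeakSpace ℝ E).symm z) :=
  WeakBilin.eval_continuous (topDualPairing ℝ E).flip f

lemma le_apply_of_mem_wClosure {S : Set E} {f : E →L[ℝ] ℝ} {c : ℝ} (h : ∀ y ∈ S, c ≤ f y) :
    ∀ x ∈ wClosure S, c ≤ f x := by
  rintro _ ⟨z, hz, rfl⟩
  refine closure_minimal ?_ (isClosed_le continuous_const (continuous_apply_toWeakSpace_symm f)) hz
  rintro _ ⟨y, hy, rfl⟩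
  simpa using h y hy

lemma WeaklyCompact.exists_lt_forall_le {S : Set E} (hS : WeaklyCompact S) {f : E →L[ℝ] ℝ}
    {c : ℝ} (h : ∀ x ∈ S, c < f x) : ∃ c', c < c' ∧ ∀ x ∈ S, c' ≤ f x := by
  obtain ⟨c', hc', hle⟩ := IsCompact.exists_forall_le' hS
    (continuous_apply_toWeakSpace_symm f).continuousOn (a := c)
    (by rintro _ ⟨x, hx, rfl⟩; simpa using h x hx)
  exact ⟨c', hc', fun x hx => by simpa using hle _ (mem_image_of_mem _ hx)⟩

end WeakClosure

lemma le_apply_of_mem_closure_convexHull {S : Set E} {f : E →L[ℝ] ℝ} {c : ℝ}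
    (h : ∀ y ∈ S, c ≤ f y) : ∀ x ∈ closure (convexHull ℝ S), c ≤ f x :=
  closure_minimal (convexHull_min h (convex_halfSpace_ge f.toLinearMap.isLinear c))
    (isClosed_le continuous_const f.continuous)

namespace IsCone

variable {K : Set E}

lemma inv_norm_smul_mem_normBase_s11 (hK : IsCone K) {k : E} (hk : k ∈ K) (hk0 : k ≠ 0) :
    ‖k‖⁻¹ • k ∈ normBase K :=
  ⟨hK.2 _ (inv_nonneg.2 (norm_nonneg k)) k hk, norm_smul_inv_norm hk0⟩

lemma mem_augDualCone_iff (hK : IsCone K) (p : (E →L[ℝ] ℝ) × ℝ) :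
    p ∈ augDualCone K ↔ 0 ≤ p.2 ∧ ∀ y ∈ normBase K, p.2 ≤ p.1 y := by
  refine ⟨fun ⟨hα, h⟩ => ⟨hα, fun y ⟨hy, hy1⟩ => by simpa [hy1] using h y hy⟩, ?_⟩
  rintro ⟨hα, h⟩
  refine ⟨hα, fun y hy => ?_⟩
  rcases eq_or_ne y 0 with rfl | hy0
  · simp
  · have hle := h _ (hK.inv_norm_smul_mem_normBase_s11 hy hy0)
    rw [map_smul, smul_eq_mul, le_inv_mul_iff₀ (norm_pos_iff.2 hy0)] at hle
    linarith [mul_comm ‖y‖ p.2]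

lemma mem_sharpCone_of_pos (hK : IsCone K) {f : E →L[ℝ] ℝ} (h : ∀ y ∈ normBase K, 0 < f y) :
    f ∈ sharpCone K := fun k hk hk0 => by
  have hpos := h _ (hK.inv_norm_smul_mem_normBase_s11 hk hk0)
  rw [map_smul, smul_eq_mul] at hpos
  exact pos_of_mul_pos_right hpos (inv_nonneg.2 (norm_nonneg k))

end IsCone

section Core

variable {K : Set E} {p : (E →L[ℝ] ℝ) × ℝ}

lemma pos_of_mem_core_augDualCone (hp : p ∈ core (augDualCone K)) : 0 < p.2 := by
  obtain ⟨ε, hε, hmem⟩ := hp.2 (0, -1)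
  have := (hmem ε ⟨hε.le, le_rfl⟩).1
  simp only [Prod.snd_add, Prod.smul_snd, smul_eq_mul] at this
  linarith

lemma lt_apply_of_mem_core_augDualCone (hK : IsCone K) (hp : p ∈ core (augDualCone K)) :
    ∀ x ∈ wClosure (normBase K), p.2 < p.1 x := by
  obtain ⟨ε, hε, hmem⟩ := hp.2 (0, 1)
  have hle := ((hK.mem_augDualCone_iff _).1 (hmem ε ⟨hε.le, le_rfl⟩)).2
  intro x hx
  have := le_apply_of_mem_wClosure (c := p.2 + ε) (fun y hy => by simpa using hle y hy) x hx
  linarith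

lemma exists_pos_forall_mul_le {c : ℝ} (hc : 0 < c) {M : ℝ} (hM : 0 ≤ M) :
    ∃ ε > 0, ∀ t ∈ Icc 0 ε, t * M ≤ c := by
  refine ⟨c / (M + 1), by positivity, fun t ⟨ht0, htε⟩ => ?_⟩
  calc t * M ≤ c / (M + 1) * (M + 1) := mul_le_mul htε (by linarith) hM (by positivity)
    _ = c := div_mul_cancel₀ c (by positivity)

lemma mem_core_augDualCone (hK : IsCone K) {c : ℝ} (hα : 0 < p.2) (hc : p.2 < c)
    (hle : ∀ y ∈ normBase K, c ≤ p.1 y) : p ∈ core (augDualCone K) := by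
  refine ⟨(hK.mem_augDualCone_iff p).2 ⟨hα.le, fun y hy => hc.le.trans (hle y hy)⟩, ?_⟩
  rintro ⟨g, β⟩
  obtain ⟨ε, hε, hsmall⟩ :=
    exists_pos_forall_mul_le (lt_min hα (sub_pos.2 hc)) (by positivity : 0 ≤ ‖g‖ + |β|)
  refine ⟨ε, hε, fun t ht => (hK.mem_augDualCone_iff _).2 ⟨?_, fun y hy => ?_⟩⟩
  all_goals
    have htM := hsmall t ht
    have hβ : |t * β| = t * |β| := by rw [abs_mul, abs_of_nonneg ht.1]
    rw [mul_add] at htM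
    simp only [Prod.fst_add, Prod.snd_add, Prod.smul_fst, Prod.smul_snd, add_apply, smul_apply,
      smul_eq_mul]
  · linarith [min_le_left p.2 (c - p.2), neg_abs_le (t * β), mul_nonneg ht.1 (norm_nonneg g)]
  · have hgy : |t * g y| ≤ t * ‖g‖ := by
      rw [abs_mul, abs_of_nonneg ht.1]
      exact mul_le_mul_of_nonneg_left (by simpa [hy.2] using g.le_opNorm y) ht.1
    linarith [min_le_right p.2 (c - p.2), hle y hy, neg_abs_le (t * g y), le_abs_self (t * β)]

theorem mem_core_augDualCone_iff (hK : IsCone K) (hcomp : WeaklyCompact (wClosure (normBase K))) :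
    p ∈ core (augDualCone K) ↔ 0 < p.2 ∧ ∀ x ∈ wClosure (normBase K), p.2 < p.1 x := by
  refine ⟨fun hp => ⟨pos_of_mem_core_augDualCone hp, lt_apply_of_mem_core_augDualCone hK hp⟩, ?_⟩
  rintro ⟨hα, hgt⟩
  obtain ⟨c, hc, hle⟩ := hcomp.exists_lt_forall_le hgt
  exact mem_core_augDualCone hK hα hc fun y hy => hle y (subset_wClosure _ hy)

theorem core_augDualCone_nonempty_iff (hK : IsCone K) :
    (core (augDualCone K)).Nonempty ↔ (0 : E) ∉ closure (convBase K) := by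
  constructor
  · rintro ⟨p, hp⟩ h0
    have hle := le_apply_of_mem_closure_convexHull ((hK.mem_augDualCone_iff p).1 hp.1).2 0 h0
    linarith [pos_of_mem_core_augDualCone hp, map_zero p.1]
  · intro h0
    obtain ⟨f, u, hu0, hu⟩ :=
      geometric_hahn_banach_point_closed (convex_convexHull ℝ _).closure isClosed_closure h0
    rw [map_zero] at hu0
    exact ⟨(f, u / 2), mem_core_augDualCone hK (half_pos hu0) (half_lt_self hu0)
      fun y hy => (hu y (subset_closure (subset_convexHull ℝ _ hy))).le⟩

end Core

theorem stmt11 (K : Set E) (hK : IsNontrivialCone K)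
    (hcomp : WeaklyCompact (wClosure (normBase K))) :
    core (augDualCone K) = {p ∈ augWSharpCone K | 0 < p.2} ∧
    ((core (augDualCone K)).Nonempty ↔ (0 : E) ∉ closure (convBase K)) := by
  refine ⟨?_, core_augDualCone_nonempty_iff hK.1⟩
  ext p
  rw [mem_core_augDualCone_iff hK.1 hcomp]
  constructor
  · rintro ⟨hα, hgt⟩
    have hsharp : p.1 ∈ sharpCone K :=
      hK.1.mem_sharpCone_of_pos fun y hy => hα.trans (hgt y (subset_wClosure _ hy))
    exact ⟨⟨hα.le, hsharp, hgt⟩, hα⟩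
  · rintro ⟨⟨-, -, hgt⟩, hα⟩
    exact ⟨hα, hgt⟩
end
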